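/- Let ε₁, ε₂ be nonzero reals with ε₁ ≠ ε₂, [x] = (ε₁^x − ε₂^x)/(ε₁ − ε₂), and lₙ(z^k) = ε₁^(−k)[k−n]z^(k+n). Then the twisted brackets give an su(1,1)-type subalgebra: (ε₁·l₀∘l₁ − ε₂·l₁∘l₀)(z^k) = l₁(z^k) and (ε₁·l₋₁∘l₀ − ε₂·l₀∘l₋₁)(z^k) = l₋₁(z^k) for all integers k. -/

import Mathlib

/-- The (ε₁,ε₂)-deformed number `[n] = (ε₁^n - ε₂^n)/(ε₁ - ε₂)`. -/
noncomputable def dnum (e1 e2 : ℝ) (n : ℤ) : ℝ := (e1 ^ n - e2 ^ n) / (e1 - e2)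

/-- The Laurent monomial `z^k`, as a coefficient function on `ℤ`. -/
noncomputable def zmon (k : ℤ) : ℤ → ℝ := fun j => if j = k then 1 else 0

/-- The deformed Witt generator: `l n (z^k) = ε₁^(-k) * [k-n] * z^(k+n)`. -/
noncomputable def wgen (e1 e2 : ℝ) (n : ℤ) (f : ℤ → ℝ) : ℤ → ℝ :=
  fun j => e1 ^ (-(j - n)) * dnum e1 e2 (j - n - n) * f (j - n)

/-!
On a monomial each `l n` acts as a scalar followed by the shift `z^k ↦ z^(k+n)`, so both sides of
each twisted bracket are multiples of the same monomial. Comparing coefficients, the identity reduces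
to the recursion `[n+1] = ε₂ [n] + ε₁^n` of the deformed numbers.
-/

theorem dnum_add_one {e1 e2 : ℝ} (h1 : e1 ≠ 0) (h2 : e2 ≠ 0) (hne : e1 ≠ e2) (n : ℤ) :
    dnum e1 e2 (n + 1) = e2 * dnum e1 e2 n + e1 ^ n := by
  have hsub : e1 - e2 ≠ 0 := sub_ne_zero.mpr hne
  simp only [dnum, zpow_add_one₀ h1, zpow_add_one₀ h2]
  field_simp
  ring

theorem wgen_smul (e1 e2 : ℝ) (n : ℤ) (c : ℝ) (f : ℤ → ℝ) :
    wgen e1 e2 n (c • f) = c • wgen e1 e2 n f := by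
  funext j
  simp only [wgen, Pi.smul_apply, smul_eq_mul]
  ring

theorem wgen_zmon (e1 e2 : ℝ) (n k : ℤ) :
    wgen e1 e2 n (zmon k) = (e1 ^ (-k) * dnum e1 e2 (k - n)) • zmon (k + n) := by
  funext j
  simp only [wgen, zmon, Pi.smul_apply, smul_eq_mul]
  by_cases hj : j = k + n
  · subst hj
    simp
  · have hj' : j - n ≠ k := by omega
    simp [hj, hj']

theorem wgen_wgen_zmon (e1 e2 : ℝ) (m n k : ℤ) :
    wgen e1 e2 m (wgen e1 e2 n (zmon k)) =
      (e1 ^ (-k) * dnum e1 e2 (k - n) * (e1 ^ (-(k + n)) * dnum e1 e2 (k + n - m)))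
        • zmon (k + n + m) := by
  rw [wgen_zmon, wgen_smul, wgen_zmon, smul_smul]

theorem twisted_bracket_wgen_zmon (e1 e2 : ℝ) (m n k : ℤ) :
    e1 • wgen e1 e2 m (wgen e1 e2 n (zmon k)) - e2 • wgen e1 e2 n (wgen e1 e2 m (zmon k)) =
      (e1 * (e1 ^ (-k) * dnum e1 e2 (k - n) * (e1 ^ (-(k + n)) * dnum e1 e2 (k + n - m)))
        - e2 * (e1 ^ (-k) * dnum e1 e2 (k - m) * (e1 ^ (-(k + m)) * dnum e1 e2 (k + m - n))))
        • zmon (k + n + m) := by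
  rw [wgen_wgen_zmon, wgen_wgen_zmon, add_right_comm k m n, smul_smul, smul_smul, sub_smul]

theorem stmt7 (e1 e2 : ℝ) (h1 : e1 ≠ 0) (h2 : e2 ≠ 0) (hne : e1 ≠ e2) (k : ℤ) :
    (e1 • wgen e1 e2 0 (wgen e1 e2 1 (zmon k)) - e2 • wgen e1 e2 1 (wgen e1 e2 0 (zmon k))
        = wgen e1 e2 1 (zmon k))
    ∧ (e1 • wgen e1 e2 (-1) (wgen e1 e2 0 (zmon k)) - e2 • wgen e1 e2 0 (wgen e1 e2 (-1) (zmon k))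
        = wgen e1 e2 (-1) (zmon k)) := by
  refine ⟨?_, ?_⟩ <;> rw [twisted_bracket_wgen_zmon, wgen_zmon] <;>
    simp only [add_zero, sub_zero, sub_neg_eq_add, ← sub_eq_add_neg]
  · congr 1
    rw [dnum_add_one h1 h2 hne, zpow_neg, zpow_neg, zpow_add_one₀ h1]
    field_simp
    ring
  · congr 1
    have hrec := dnum_add_one h1 h2 hne (k - 1)
    rw [sub_add_cancel] at hrec
    rw [hrec, zpow_neg, zpow_neg, zpow_sub_one₀ h1]
    field_simp
    ring
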